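/- Let n and r be positive integers, let w ∈ S(n,r), and let k ∈ {1,…,n−1} be a double ascent of w. Let ℓ be the smallest index with k < ℓ < n and w_{ℓ+1} < w_k (such ℓ exists). If w_k < w_ℓ, then the word w'' = (w''_0, w''_1, …, w''_n) defined by w''_ℓ = w_k, w''_{i−1} = w_i for k < i ≤ ℓ, and w''_i = w_i for all other indices i, belongs to S(n,r) and satisfies asc(w'') = asc(w) − 1. -/

import Mathlib

open scoped Classical

noncomputable section

/-- Value of a word `w : Fin (n+1) → ℕ` at a natural index (junk value `0` out of range). -/
def wv {n : ℕ} (w : Fin (n + 1) → ℕ) (k : ℕ) : ℕ :=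
  if h : k < n + 1 then w ⟨k, h⟩ else 0

/-- The number of ascents of a word `w = (w_0, w_1, …, w_n)`, i.e. the number of indices
`i ∈ {0,…,n-1}` with `w_i < w_{i+1}`. -/
def asc {n : ℕ} (w : Fin (n + 1) → ℕ) : ℕ :=
  ((Finset.range n).filter fun i => wv w i < wv w (i + 1)).card

/-- The set `S(n,r)` of Smirnov words `w = (w_0, …, w_n) ∈ {0,…,r-1}^{n+1}` with
`w_0 = w_n = 0` and no two consecutive entries equal. -/
def smirnov (n r : ℕ) : Finset (Fin (n + 1) → ℕ) :=
  (Fintype.piFinset fun _ => Finset.range r).filter fun w =>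
    wv w 0 = 0 ∧ wv w n = 0 ∧ ∀ i < n, wv w i ≠ wv w (i + 1)

/-- `k ∈ {1,…,n-1}` is a double ascent of `w` if `w_{k-1} < w_k < w_{k+1}`. -/
def doubleAscent {n : ℕ} (w : Fin (n + 1) → ℕ) (k : ℕ) : Prop :=
  1 ≤ k ∧ k < n ∧ wv w (k - 1) < wv w k ∧ wv w k < wv w (k + 1)

/-- `k ∈ {1,…,n-1}` is a double descent of `w` if `w_{k-1} > w_k > w_{k+1}`. -/
def doubleDescent {n : ℕ} (w : Fin (n + 1) → ℕ) (k : ℕ) : Prop :=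
  1 ≤ k ∧ k < n ∧ wv w k < wv w (k - 1) ∧ wv w (k + 1) < wv w k

/-- `w` has the matching property: for every double ascent `k` of `w` there is a double
descent `ℓ > k` with `w_k = w_ℓ` and `w_k ≤ w_j` for all `k < j < ℓ`. -/
def hasMatching {n : ℕ} (w : Fin (n + 1) → ℕ) : Prop :=
  ∀ k, doubleAscent w k →
    ∃ l, k < l ∧ doubleDescent w l ∧ wv w k = wv w l ∧
      ∀ j, k < j → j < l → wv w k ≤ wv w j

/-- The set of indices `ℓ` with `k < ℓ < n` and `w_{ℓ+1} < w_k`. -/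
def rightSet {n : ℕ} (w : Fin (n + 1) → ℕ) (k : ℕ) : Set ℕ :=
  {l | k < l ∧ l < n ∧ wv w (l + 1) < wv w k}

/-- The set of indices `ℓ` with `1 ≤ ℓ < k` and `w_{ℓ-1} < w_k`. -/
def leftSet {n : ℕ} (w : Fin (n + 1) → ℕ) (k : ℕ) : Set ℕ :=
  {l | 1 ≤ l ∧ l < k ∧ wv w (l - 1) < wv w k}

/-- The word `w'` obtained from `w` by deleting `w_k` and inserting it between
`w_{ℓ-1}` and `w_ℓ` (for `ℓ < k`): `w'_ℓ = w_k`, `w'_{i+1} = w_i` for `ℓ ≤ i < k`,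
and `w'_i = w_i` for all other indices. -/
def leftMove {n : ℕ} (w : Fin (n + 1) → ℕ) (k l : ℕ) : Fin (n + 1) → ℕ :=
  fun i => if (i : ℕ) = l then wv w k
    else if l < (i : ℕ) ∧ (i : ℕ) ≤ k then wv w ((i : ℕ) - 1) else w i

/-- The word `w''` obtained from `w` by deleting `w_k` and inserting it between
`w_ℓ` and `w_{ℓ+1}` (for `k < ℓ`): `w''_ℓ = w_k`, `w''_{i-1} = w_i` for `k < i ≤ ℓ`,
and `w''_i = w_i` for all other indices. -/
def rightMove {n : ℕ} (w : Fin (n + 1) → ℕ) (k l : ℕ) : Fin (n + 1) → ℕ :=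
  fun i => if (i : ℕ) = l then wv w k
    else if k ≤ (i : ℕ) ∧ (i : ℕ) < l then wv w ((i : ℕ) + 1) else w i

/-!
Moving `w_k` to the gap between `w_ℓ` and `w_{ℓ+1}` only shifts the adjacent pairs strictly
between positions `k` and `ℓ`; it replaces the pairs `(w_{k-1}, w_k)`, `(w_k, w_{k+1})`,
`(w_ℓ, w_{ℓ+1})` (ascent, ascent, descent) by `(w_{k-1}, w_{k+1})`, `(w_ℓ, w_k)`, `(w_k, w_{ℓ+1})`
(ascent, descent, descent). Since `w_{k-1} < w_k < w_{k+1}` and `w_{ℓ+1} < w_k < w_ℓ`, no new pair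
has equal entries, so the word stays Smirnov and loses exactly one ascent. An index `ℓ` exists
because `ℓ = n - 1` qualifies: `w_n = 0 < w_k`.
-/

lemma wv_of_lt {n : ℕ} (w : Fin (n + 1) → ℕ) {i : ℕ} (h : i < n + 1) : wv w i = w ⟨i, h⟩ :=
  dif_pos h

lemma mem_smirnov_iff {n r : ℕ} {w : Fin (n + 1) → ℕ} :
    w ∈ smirnov n r ↔ (∀ i ≤ n, wv w i < r) ∧ wv w 0 = 0 ∧ wv w n = 0 ∧
      ∀ i < n, wv w i ≠ wv w (i + 1) := by
  rw [smirnov, Finset.mem_filter]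
  refine and_congr_left' ⟨fun h i hi => ?_, fun h => Fintype.mem_piFinset.mpr fun i => ?_⟩
  · rw [wv_of_lt w (by omega)]
    exact Finset.mem_range.mp (Fintype.mem_piFinset.mp h _)
  · exact Finset.mem_range.mpr (wv_of_lt w i.isLt ▸ h i (by omega))

/-- Off position `l`, the entry `i` of `rightMove w k l` is the entry `rightShift k l i` of `w`. -/
def rightShift (k l i : ℕ) : ℕ :=
  if k ≤ i ∧ i < l then i + 1 else i

section rightMove

variable {n : ℕ} {w : Fin (n + 1) → ℕ} {k l : ℕ}

lemma wv_rightMove_self (hl : l ≤ n) : wv (rightMove w k l) l = wv w k := by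
  rw [wv_of_lt _ (by omega)]
  exact if_pos rfl

lemma wv_rightMove_of_ne (hl : l ≤ n) {i : ℕ} (hi : i ≠ l) :
    wv (rightMove w k l) i = wv w (rightShift k l i) := by
  by_cases hin : i < n + 1
  · rw [wv_of_lt _ hin]
    simp only [rightMove, rightShift, if_neg hi]
    split_ifs <;> simp [wv_of_lt w hin]
  · simp [wv, rightShift, hin, show ¬ i < l by omega]

lemma rightMove_mem_smirnov {r : ℕ} (hw : w ∈ smirnov n r) (hk : 0 < k) (hkl : k < l)
    (hl : l < n) (hk_ne : wv w (k - 1) ≠ wv w (k + 1)) (hl_ne : wv w l ≠ wv w k)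
    (hl_ne' : wv w k ≠ wv w (l + 1)) : rightMove w k l ∈ smirnov n r := by
  obtain ⟨hr, h0, hn, hne⟩ := mem_smirnov_iff.mp hw
  refine mem_smirnov_iff.mpr ⟨fun i hi => ?_, ?_, ?_, fun i hi => ?_⟩
  · rcases eq_or_ne i l with rfl | hil
    · rw [wv_rightMove_self hl.le]; exact hr k (by omega)
    · rw [wv_rightMove_of_ne hl.le hil]; exact hr _ (by unfold rightShift; split_ifs <;> omega)
  · rwa [wv_rightMove_of_ne hl.le (by omega), rightShift, if_neg (by omega)]
  · rwa [wv_rightMove_of_ne hl.le (by omega), rightShift, if_neg (by omega)]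
  · rcases eq_or_ne i l with rfl | hil
    · rw [wv_rightMove_self hl.le, wv_rightMove_of_ne hl.le (by omega)]
      unfold rightShift
      grind
    · rw [wv_rightMove_of_ne hl.le hil]
      rcases eq_or_ne (i + 1) l with hil' | hil'
      · rw [hil', wv_rightMove_self hl.le]
        unfold rightShift
        grind
      · rw [wv_rightMove_of_ne hl.le hil']
        unfold rightShift
        grind

lemma rightMove_lt_succ_iff (hk : doubleAscent w k) (hkl : k < l) (hl : l ≤ n)
    (hup : wv w k < wv w l) (hdown : wv w (l + 1) < wv w k) (i : ℕ) :
    wv (rightMove w k l) i < wv (rightMove w k l) (i + 1) ↔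
      i + 1 ≠ l ∧ i ≠ l ∧ wv w (rightShift k l i) < wv w (rightShift k l i + 1) := by
  obtain ⟨hk1, -, hk_pred, hk_succ⟩ := hk
  rcases eq_or_ne i l with rfl | hil
  · rw [wv_rightMove_self hl, wv_rightMove_of_ne hl (by omega)]
    unfold rightShift
    grind
  · rw [wv_rightMove_of_ne hl hil]
    rcases eq_or_ne (i + 1) l with hil' | hil'
    · rw [hil', wv_rightMove_self hl]
      unfold rightShift
      grind
    · rw [wv_rightMove_of_ne hl hil']
      unfold rightShift
      grind

lemma asc_rightMove_add_one (hk : doubleAscent w k) (hkl : k < l) (hl : l < n)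
    (hup : wv w k < wv w l) (hdown : wv w (l + 1) < wv w k) :
    asc (rightMove w k l) + 1 = asc w := by
  have hiff := rightMove_lt_succ_iff hk hkl hl.le hup hdown
  have hk_mem : k ∈ (Finset.range n).filter fun i => wv w i < wv w (i + 1) := by
    simp only [Finset.mem_filter, Finset.mem_range]
    exact ⟨hk.2.1, hk.2.2.2⟩
  unfold asc
  rw [← Finset.card_erase_add_one hk_mem]
  congr 1
  -- `rightShift k l` matches the ascents of `rightMove w k l` with the ascents of `w` other than `k`
  refine Finset.card_bij' (fun i _ => rightShift k l i)
    (fun a _ => if k < a ∧ a ≤ l then a - 1 else a) ?_ ?_ ?_ ?_ <;>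
    simp only [Finset.mem_filter, Finset.mem_erase, Finset.mem_range, hiff]
  · rintro i ⟨hin, hil', hil, hasc⟩
    refine ⟨?_, ?_, hasc⟩ <;> unfold rightShift <;> split_ifs <;> omega
  · rintro a ⟨hak, han, hasc⟩
    have hal : a ≠ l := by rintro rfl; omega
    have hσ : rightShift k l (if k < a ∧ a ≤ l then a - 1 else a) = a := by
      unfold rightShift; split_ifs <;> omega
    rw [hσ]
    exact ⟨by split_ifs <;> omega, by split_ifs <;> omega, by split_ifs <;> omega, hasc⟩
  · rintro i ⟨hin, hil', hil, -⟩
    unfold rightShift; split_ifs <;> omega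
  · rintro a ⟨hak, -⟩
    unfold rightShift; split_ifs <;> omega

end rightMove

lemma rightSet_nonempty {n r : ℕ} {w : Fin (n + 1) → ℕ} {k : ℕ} (hw : w ∈ smirnov n r)
    (hk : doubleAscent w k) : (rightSet w k).Nonempty := by
  obtain ⟨-, -, hwn, -⟩ := mem_smirnov_iff.mp hw
  obtain ⟨-, hkn, hk_pred, hk_succ⟩ := hk
  have hk_succ_ne : k + 1 ≠ n := by
    rintro h
    rw [h, hwn] at hk_succ
    omega
  exact ⟨n - 1, by omega, by omega, by rw [Nat.sub_add_cancel (by omega), hwn]; omega⟩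

theorem rightMatch_mem_and_asc_general (n r : ℕ)
    (w : Fin (n + 1) → ℕ) (hw : w ∈ smirnov n r) (k : ℕ) (hk : doubleAscent w k) :
    (rightSet w k).Nonempty ∧
    (wv w k < wv w (sInf (rightSet w k)) →
      rightMove w k (sInf (rightSet w k)) ∈ smirnov n r ∧
        asc (rightMove w k (sInf (rightSet w k))) + 1 = asc w) := by
  have hne := rightSet_nonempty hw hk
  refine ⟨hne, fun hup => ?_⟩
  obtain ⟨hkl, hl, hdown⟩ := Nat.sInf_mem hne
  have hk_ne : wv w (k - 1) ≠ wv w (k + 1) := (hk.2.2.1.trans hk.2.2.2).ne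
  exact ⟨rightMove_mem_smirnov hw hk.1 hkl hl hk_ne hup.ne' hdown.ne',
    asc_rightMove_add_one hk hkl hl hup hdown⟩

/-- For `w ∈ S(n,r)` and a double ascent `k` of `w`: the set of indices `ℓ` with
`k < ℓ < n` and `w_{ℓ+1} < w_k` is nonempty, and if its smallest element `ℓ` satisfies
`w_k < w_ℓ`, then the right match `w''` (obtained by deleting `w_k` and inserting it
between `w_ℓ` and `w_{ℓ+1}`) belongs to `S(n,r)` and has exactly one less ascent
than `w`. -/
theorem rightMatch_mem_and_asc (n r : ℕ) (hn : 0 < n) (hr : 0 < r)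
    (w : Fin (n + 1) → ℕ) (hw : w ∈ smirnov n r) (k : ℕ) (hk : doubleAscent w k) :
    (rightSet w k).Nonempty ∧
    (wv w k < wv w (sInf (rightSet w k)) →
      rightMove w k (sInf (rightSet w k)) ∈ smirnov n r ∧
        asc (rightMove w k (sInf (rightSet w k))) + 1 = asc w) :=
  rightMatch_mem_and_asc_general n r w hw k hk
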